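/- arXiv:1005.4401 — 2 statements merged into one kernel-verified Lean document; each statement's English description precedes it below -/
import Mathlib

section
/- The polynomial f_r of the previous statement satisfies f_r(-X) = (-1)^r f_r(X) in ℚ[X]. -/
/-!
Expanding the logarithm of `genPoly k`, its coefficients are given by Newton's identities in the
power sums `p_m(k) = ∑_j min(j, 2k - j) j^m`, and `x^r` receives a combination of products
`p_{m₁} ⋯ p_{mₛ}` with `m₁ + ⋯ + mₛ = r`. By Faulhaber's formula each `p_m` is a polynomial in
`k`, and the reflection formulas for Bernoulli polynomials give `p_m(-k) = (-1)^m p_m(k)`, so this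
coefficient is a polynomial in `k` of parity `(-1)^r`. The polynomial `f` agrees with it at
infinitely many integers.
-/

open Polynomial

/-- The polynomial `∏_{j=1}^{k} (1 + j x)^j · ∏_{j=k+1}^{2k} (1 + j x)^{2k-j}` over ℚ. -/
noncomputable def genPoly (k : ℕ) : Polynomial ℚ :=
  (∏ j ∈ Finset.Icc 1 k, (1 + Polynomial.C (j : ℚ) * Polynomial.X) ^ j) *
    ∏ j ∈ Finset.Icc (k + 1) (2 * k), (1 + Polynomial.C (j : ℚ) * Polynomial.X) ^ (2 * k - j)

open Finset

lemma eq_of_eval_natCast_eq_of_le {R : Type*} [CommRing R] [IsDomain R] [CharZero R]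
    {p q : R[X]} (N : ℕ) (h : ∀ n ≥ N, p.eval (n : R) = q.eval (n : R)) : p = q := by
  refine eq_of_infinite_eval_eq p q (Set.infinite_of_injective_forall_mem
    (f := fun n : ℕ => ((n + N : ℕ) : R)) ?_ fun n => h _ (by omega))
  exact Nat.cast_injective.comp (add_left_injective N)

noncomputable def powerSumPoly (t : ℕ) : ℚ[X] :=
  C ((t + 1 : ℚ)⁻¹) * (Polynomial.bernoulli (t + 1) - C (_root_.bernoulli (t + 1)))

lemma powerSumPoly_eval_natCast (t n : ℕ) :
    (powerSumPoly t).eval (n : ℚ) = ∑ j ∈ range n, (j : ℚ) ^ t := by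
  rw [powerSumPoly, eval_mul, eval_C, eval_sub, eval_C, ← sum_range_pow_eq_bernoulli_sub]
  field_simp

lemma powerSumPoly_eval_add_one (t : ℕ) (x : ℚ) :
    (powerSumPoly t).eval (x + 1) = (powerSumPoly t).eval x + x ^ t := by
  simp only [powerSumPoly, eval_mul, eval_C, eval_sub, add_comm x, bernoulli_eval_one_add]
  push_cast
  field_simp
  ring

lemma powerSumPoly_eval_neg {t : ℕ} (ht : t ≠ 0) (x : ℚ) :
    (powerSumPoly t).eval (-x) = (-1) ^ (t + 1) * ((powerSumPoly t).eval x + x ^ t) := by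
  have hB : _root_.bernoulli (t + 1) = (-1) ^ (t + 1) * _root_.bernoulli (t + 1) := by
    rcases Nat.even_or_odd (t + 1) with h | h
    · rw [h.neg_one_pow, one_mul]
    · rw [_root_.bernoulli_eq_zero_of_odd h (by omega), mul_zero]
  simp only [powerSumPoly, eval_mul, eval_C, eval_sub, bernoulli_eval_neg]
  push_cast
  field_simp
  linear_combination (-1 : ℚ) * hB

/-- Faulhaber form of the power sum `∑_{j ≤ 2k} min(j, 2k - j) j^m` as a polynomial in `k`. -/
noncomputable def tentPoly (m : ℕ) : ℚ[X] :=
  2 * (powerSumPoly (m + 1)).comp (X + 1) - (powerSumPoly (m + 1)).comp (2 * X + 1)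
    + 2 * X * ((powerSumPoly m).comp (2 * X + 1) - (powerSumPoly m).comp (X + 1))

lemma tentPoly_eval_natCast (m k : ℕ) :
    (tentPoly m).eval (k : ℚ) = ∑ j ∈ Icc 1 k, (j : ℚ) * (j : ℚ) ^ m
      + ∑ j ∈ Icc (k + 1) (2 * k), ((2 * k - j : ℕ) : ℚ) * (j : ℚ) ^ m := by
  have hrise : ∑ j ∈ Icc 1 k, (j : ℚ) * (j : ℚ) ^ m = ∑ j ∈ range (k + 1), (j : ℚ) ^ (m + 1) := by
    rw [← Ico_add_one_right_eq_Icc, sum_Ico_eq_sub _ (by omega)]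
    simp [pow_succ, mul_comm]
  have hfall : ∑ j ∈ Icc (k + 1) (2 * k), ((2 * k - j : ℕ) : ℚ) * (j : ℚ) ^ m
      = 2 * k * ∑ j ∈ Ico (k + 1) (2 * k + 1), (j : ℚ) ^ m
        - ∑ j ∈ Ico (k + 1) (2 * k + 1), (j : ℚ) ^ (m + 1) := by
    rw [Ico_add_one_right_eq_Icc, mul_sum, ← sum_sub_distrib]
    refine sum_congr rfl fun j hj => ?_
    rw [Nat.cast_sub (mem_Icc.1 hj).2]
    push_cast
    ring
  rw [hrise, hfall, sum_Ico_eq_sub _ (by omega), sum_Ico_eq_sub _ (by omega)]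
  simp only [tentPoly, eval_add, eval_sub, eval_mul, eval_comp, eval_X, eval_one, eval_ofNat]
  simp only [← powerSumPoly_eval_natCast]
  push_cast
  ring

lemma tentPoly_eval_neg {m : ℕ} (hm : m ≠ 0) (x : ℚ) :
    (tentPoly m).eval (-x) = (-1) ^ m * (tentPoly m).eval x := by
  simp only [tentPoly, eval_add, eval_sub, eval_mul, eval_comp, eval_X, eval_one, eval_ofNat,
    mul_neg, powerSumPoly_eval_add_one, powerSumPoly_eval_neg hm,
    powerSumPoly_eval_neg m.add_one_ne_zero]
  ring

section PowerSums

open PowerSeries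

variable {R : Type*} [CommRing R]

/-- `Q` behaves like `∏ᵢ (1 + aᵢ X)` with `p m = ∑ᵢ aᵢ ^ m`: its logarithmic derivative is
`∑ᵢ aᵢ / (1 + aᵢ X) = ∑ₘ (-1)^m p (m + 1) X^m`. -/
def HasPowerSums (Q : R⟦X⟧) (p : ℕ → R) : Prop :=
  d⁄dX R Q = mk (fun m => (-1) ^ m * p (m + 1)) * Q

lemma hasPowerSums_one : HasPowerSums (1 : R⟦X⟧) 0 := by
  unfold HasPowerSums
  ext n
  simp

lemma HasPowerSums.mul {Q Q' : R⟦X⟧} {p p' : ℕ → R} (h : HasPowerSums Q p)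
    (h' : HasPowerSums Q' p') : HasPowerSums (Q * Q') (p + p') := by
  unfold HasPowerSums at *
  have hmk : mk (fun m => (-1) ^ m * (p + p') (m + 1))
      = mk (fun m => (-1) ^ m * p (m + 1)) + mk (fun m => (-1) ^ m * p' (m + 1)) := by
    ext m; simp [mul_add]
  rw [Derivation.leibniz, smul_eq_mul, smul_eq_mul, h, h', hmk]
  ring

lemma HasPowerSums.pow {Q : R⟦X⟧} {p : ℕ → R} (h : HasPowerSums Q p) (n : ℕ) :
    HasPowerSums (Q ^ n) (n • p) := by
  induction n with
  | zero => simpa using hasPowerSums_one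
  | succ n ih =>
    rw [pow_succ, succ_nsmul]
    exact ih.mul h

lemma hasPowerSums_prod {ι : Type*} (s : Finset ι) (Q : ι → R⟦X⟧) (p : ι → ℕ → R)
    (h : ∀ i ∈ s, HasPowerSums (Q i) (p i)) : HasPowerSums (∏ i ∈ s, Q i) (∑ i ∈ s, p i) := by
  classical
  induction s using Finset.induction with
  | empty => simpa using hasPowerSums_one
  | insert a s ha ih =>
    rw [prod_insert ha, sum_insert ha]
    exact (h a (mem_insert_self a s)).mul (ih fun i hi => h i (mem_insert_of_mem hi))

lemma hasPowerSums_one_add_C_mul_X (a : R) :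
    HasPowerSums (1 + PowerSeries.C a * PowerSeries.X) (fun m => a ^ m) := by
  have hd : d⁄dX R (1 + PowerSeries.C a * PowerSeries.X) = PowerSeries.C a := by simp
  unfold HasPowerSums
  ext n
  rw [hd, mul_add, mul_one, ← mul_assoc, map_add]
  rcases n with _ | n
  · simp
  · rw [PowerSeries.coeff_succ_mul_X, PowerSeries.coeff_mul_C, coeff_mk, coeff_mk,
      PowerSeries.coeff_C, if_neg n.add_one_ne_zero]
    ring

lemma HasPowerSums.coeff_succ {Q : R⟦X⟧} {p : ℕ → R} (h : HasPowerSums Q p) (n : ℕ) :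
    (n + 1) * PowerSeries.coeff (n + 1) Q
      = ∑ i ∈ range (n + 1), (-1) ^ i * p (i + 1) * PowerSeries.coeff (n - i) Q := by
  have := congrArg (PowerSeries.coeff n) h
  rw [PowerSeries.coeff_derivative, PowerSeries.coeff_mul,
    Nat.sum_antidiagonal_eq_sum_range_succ (fun i j =>
      PowerSeries.coeff i (mk fun m => (-1) ^ m * p (m + 1)) * PowerSeries.coeff j Q)] at this
  simpa [mul_comm] using this

end PowerSums

/-- Newton's identities `n eₙ = ∑_{i < n} (-1)^i p_{i+1} e_{n-1-i}` solved for `eₙ`, with the power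
sums given as polynomials `P m` in a parameter. -/
noncomputable def esymmOfPowerSums {K : Type*} [Field K] (P : ℕ → K[X]) : ℕ → K[X]
  | 0 => 1
  | n + 1 => C ((n + 1 : K)⁻¹) *
      ∑ i ∈ range (n + 1), C ((-1) ^ i) * P (i + 1) * esymmOfPowerSums P (n - i)
decreasing_by omega

section esymmOfPowerSums

variable {K : Type*} [Field K] {P : ℕ → K[X]}

lemma esymmOfPowerSums_eval [CharZero K] {x : K} {Q : PowerSeries K}
    (hQ : HasPowerSums Q fun m => (P m).eval x) (h0 : PowerSeries.constantCoeff Q = 1) (n : ℕ) :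
    (esymmOfPowerSums P n).eval x = PowerSeries.coeff n Q := by
  induction n using Nat.strong_induction_on with
  | _ n ih =>
    rcases n with _ | n
    · simp [esymmOfPowerSums, h0]
    · rw [esymmOfPowerSums, eval_mul, eval_C, eval_finsetSum,
        inv_mul_eq_iff_eq_mul₀ (Nat.cast_add_one_ne_zero n), hQ.coeff_succ]
      refine sum_congr rfl fun i _ => ?_
      rw [eval_mul, eval_mul, eval_C, ih (n - i) (by omega)]

lemma esymmOfPowerSums_eval_neg
    (hP : ∀ m x, (P (m + 1)).eval (-x) = (-1) ^ (m + 1) * (P (m + 1)).eval x) (n : ℕ) (x : K) :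
    (esymmOfPowerSums P n).eval (-x) = (-1) ^ n * (esymmOfPowerSums P n).eval x := by
  induction n using Nat.strong_induction_on with
  | _ n ih =>
    rcases n with _ | n
    · simp [esymmOfPowerSums]
    · simp only [esymmOfPowerSums, eval_mul, eval_C, eval_finsetSum, mul_sum]
      refine sum_congr rfl fun i hi => ?_
      obtain ⟨j, rfl⟩ := Nat.exists_eq_add_of_le (mem_range_succ_iff.1 hi)
      rw [hP, ih _ (by omega), Nat.add_sub_cancel_left]
      ring

end esymmOfPowerSums

lemma hasPowerSums_genPoly (k : ℕ) :
    HasPowerSums (genPoly k : PowerSeries ℚ) fun m => (tentPoly m).eval (k : ℚ) := by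
  have hfactor (j w : ℕ) : HasPowerSums (((1 + C (j : ℚ) * X) ^ w : ℚ[X]) : PowerSeries ℚ)
      (w • fun m => (j : ℚ) ^ m) := by
    rw [Polynomial.coe_pow, Polynomial.coe_add, Polynomial.coe_one, Polynomial.coe_mul, coe_C,
      coe_X]
    exact (hasPowerSums_one_add_C_mul_X (j : ℚ)).pow w
  have h := (hasPowerSums_prod (Icc 1 k) _ _ fun j _ => hfactor j j).mul
    (hasPowerSums_prod (Icc (k + 1) (2 * k)) _ _ fun j _ => hfactor j (2 * k - j))
  rw [genPoly, ← coeToPowerSeries.ringHom_apply, map_mul, map_prod, map_prod]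
  simp only [coeToPowerSeries.ringHom_apply]
  convert h using 1
  funext m
  simp [tentPoly_eval_natCast]

lemma constantCoeff_genPoly (k : ℕ) :
    PowerSeries.constantCoeff (genPoly k : PowerSeries ℚ) = 1 := by
  simp [constantCoeff_coe, coeff_zero_eq_eval_zero, genPoly, eval_prod]

theorem stmt_13_general (r : ℕ) (f : Polynomial ℚ)
    (hval : ∀ k : ℕ, 0 < k → r ≤ k ^ 2 → (genPoly k).coeff r = f.eval (k : ℚ)) :
    f.comp (-Polynomial.X) = Polynomial.C ((-1 : ℚ) ^ r) * f := by
  have hf : f = esymmOfPowerSums tentPoly r := by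
    refine eq_of_eval_natCast_eq_of_le (r + 1) fun k hk => ?_
    rw [← hval k (by omega) (by nlinarith), ← coeff_coe,
      esymmOfPowerSums_eval (hasPowerSums_genPoly k) (constantCoeff_genPoly k)]
  refine Polynomial.funext fun x => ?_
  rw [hf, eval_comp, eval_neg, eval_X, eval_mul, eval_C,
    esymmOfPowerSums_eval_neg fun m => tentPoly_eval_neg m.add_one_ne_zero]

theorem stmt_13 (r : ℕ) (f : Polynomial ℚ)
    (hdeg : f.natDegree = 3 * r)
    (hval : ∀ k : ℕ, 0 < k → r ≤ k ^ 2 → (genPoly k).coeff r = f.eval (k : ℚ)) :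
    f.comp (-Polynomial.X) = Polynomial.C ((-1 : ℚ) ^ r) * f :=
  stmt_13_general r f hval
end

section
/- For r ≥ 2, the coefficient of k^{3r-2} in the polynomial f_r is -7/(12 (r-2)!), where f_r is the polynomial with f_r(k) equal to the coefficient of x^r in ∏_{j=1}^{k} (1 + j x)^j ∏_{j=k+1}^{2k} (1 + j x)^{2k-j}. -/
/-! The coefficient of `x ^ r` in `genPoly k` is the elementary symmetric function `e_r` of the
multiset containing `j` with multiplicity `j` for `j ≤ k` and `2k - j` for `k < j ≤ 2k`. By
Faulhaber's formula its power sums `p_m` are polynomials in `k` of degree `m + 2`, with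
`p_1 = k ^ 3` and `p_2 = 7/6 k ^ 4 - 1/6 k ^ 2`. Newton's identities then make `e_r` a polynomial
in `k` of degree `3r`, which is `f` since the two agree at infinitely many `k`. Only the products
`p_1 ^ r` and `p_1 ^ (r - 2) * p_2` reach the degrees `3r` and `3r - 2`, and their coefficients
in `e_r` are `1 / r!` and `-1 / (2 (r - 2)!)`. -/

open Polynomial

open Finset

section Newton

variable {R : Type*} [CommRing R]

-- Modulo `X ^ n`, `C a / (1 + C a * X)` is the truncated geometric series
-- `C a * ∑ i < n, (-(C a * X)) ^ i`; sum this over the factors of the logarithmic derivative.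
theorem Multiset.X_pow_dvd_derivative_prod_one_add_C_mul_X_sub (s : Multiset R) (n : ℕ) :
    X ^ n ∣ derivative (s.map fun a => 1 + C a * X).prod -
      (∑ i ∈ Finset.range n, C ((-1) ^ i * (s.map (· ^ (i + 1))).sum) * X ^ i) *
        (s.map fun a => 1 + C a * X).prod := by
  classical
  set f : R → R[X] := fun a => 1 + C a * X
  have hS : ∑ i ∈ Finset.range n, C ((-1) ^ i * (s.map (· ^ (i + 1))).sum) * X ^ i
      = (s.map fun a => C a * ∑ i ∈ Finset.range n, (-(C a * X)) ^ i).sum := by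
    simp only [Finset.mul_sum, Multiset.sum_map_sum, ← Multiset.sum_map_mul_left,
      ← Multiset.sum_map_mul_right, map_multiset_sum, Multiset.map_map, Function.comp_def]
    refine Finset.sum_congr rfl fun i _ => congrArg _ (Multiset.map_congr rfl fun a _ => ?_)
    rw [← neg_mul, mul_pow, ← C_neg, ← C_pow, ← mul_assoc, ← C_mul]
    ring_nf
  have hdiff : derivative (s.map f).prod -
      (s.map fun a => C a * ∑ i ∈ Finset.range n, (-(C a * X)) ^ i).sum * (s.map f).prod
      = (s.map fun a => ((s.erase a).map f).prod * C a * (-(C a * X)) ^ n).sum := by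
    rw [derivative_prod, ← Multiset.sum_map_mul_right, ← Multiset.sum_map_sub]
    refine congrArg _ (Multiset.map_congr rfl fun a ha => ?_)
    rw [← Multiset.prod_map_erase (f := f) ha]
    have hgeom := mul_neg_geom_sum (-(C a * X)) n
    simp only [f, derivative_add, derivative_one, derivative_C_mul_X, zero_add, sub_neg_eq_add]
      at hgeom ⊢
    linear_combination (-(C a * ((s.erase a).map f).prod)) * hgeom
  rw [hS, hdiff]
  refine Multiset.dvd_sum fun p hp => ?_
  obtain ⟨a, -, rfl⟩ := Multiset.mem_map.mp hp
  exact ⟨((s.erase a).map f).prod * C a * (-C a) ^ n, by rw [← neg_mul, mul_pow]; ring⟩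

theorem Multiset.succ_mul_coeff_prod_one_add_C_mul_X (s : Multiset R) (r : ℕ) :
    ((r : R) + 1) * (s.map fun a => 1 + C a * X).prod.coeff (r + 1) =
      ∑ i ∈ Finset.range (r + 1), (-1) ^ i * (s.map (· ^ (i + 1))).sum *
        (s.map fun a => 1 + C a * X).prod.coeff (r - i) := by
  have h := (X_pow_dvd_iff.mp (s.X_pow_dvd_derivative_prod_one_add_C_mul_X_sub (r + 1))) r
    (Nat.lt_succ_self r)
  rw [coeff_sub, sub_eq_zero, coeff_derivative, Finset.sum_mul, finsetSum_coeff] at h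
  rw [mul_comm, h]
  refine Finset.sum_congr rfl fun i hi => ?_
  rw [mul_assoc, coeff_C_mul, coeff_X_pow_mul', if_pos (Nat.lt_succ_iff.mp (mem_range.mp hi))]

end Newton

noncomputable def faulhaber (p : ℕ) : ℚ[X] :=
  ∑ i ∈ range (p + 1), C (_root_.bernoulli i * (p + 1).choose i / (p + 1)) * X ^ (p + 1 - i)

theorem eval_faulhaber (p n : ℕ) :
    (faulhaber p).eval (n : ℚ) = ∑ j ∈ range n, (j : ℚ) ^ p := by
  rw [sum_range_pow, faulhaber, eval_finsetSum]
  simp only [eval_mul, eval_C, eval_pow, eval_X]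
  exact sum_congr rfl fun i _ => by ring

theorem natDegree_faulhaber_le (p : ℕ) : (faulhaber p).natDegree ≤ p + 1 :=
  natDegree_sum_le_of_forall_le _ _ fun _ _ => (natDegree_C_mul_le _ _).trans (by simp)

noncomputable def psumPoly (m : ℕ) : ℚ[X] :=
  (faulhaber (m + 1)).comp (X + 1)
    + C 2 * X * ((faulhaber m).comp (C 2 * X + 1) - (faulhaber m).comp (X + 1))
    - ((faulhaber (m + 1)).comp (C 2 * X + 1) - (faulhaber (m + 1)).comp (X + 1))

theorem eval_psumPoly (m k : ℕ) :
    (psumPoly m).eval (k : ℚ) = ∑ j ∈ Icc 1 k, (j : ℚ) ^ (m + 1)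
      + ∑ j ∈ Icc (k + 1) (2 * k), ((2 * k - j : ℕ) : ℚ) * (j : ℚ) ^ m := by
  have sum_Icc (a b : ℕ) (g : ℕ → ℚ) (h : a ≤ b + 1) :
      ∑ j ∈ Icc a b, g j = ∑ j ∈ range (b + 1), g j - ∑ j ∈ range a, g j := by
    rw [← Ico_add_one_right_eq_Icc, sum_Ico_eq_sub _ h]
  have hcast : ∑ j ∈ Icc (k + 1) (2 * k), ((2 * k - j : ℕ) : ℚ) * (j : ℚ) ^ m
      = ∑ j ∈ Icc (k + 1) (2 * k), (2 * (k : ℚ) * (j : ℚ) ^ m - (j : ℚ) ^ (m + 1)) :=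
    sum_congr rfl fun j hj => by
      rw [Nat.cast_sub (mem_Icc.mp hj).2]; push_cast; ring
  rw [hcast, sum_sub_distrib, ← mul_sum, sum_Icc _ _ _ (by omega), sum_Icc _ _ _ (by omega),
    sum_Icc _ _ _ (by omega)]
  simp only [psumPoly, eval_add, eval_sub, eval_mul, eval_comp, eval_C, eval_X, eval_one]
  have h1 : (k : ℚ) + 1 = ((k + 1 : ℕ) : ℚ) := by push_cast; ring
  have h2 : 2 * (k : ℚ) + 1 = ((2 * k + 1 : ℕ) : ℚ) := by push_cast; ring
  simp only [h1, h2, eval_faulhaber, range_one, sum_singleton, Nat.cast_zero,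
    zero_pow (Nat.succ_ne_zero m), sub_zero]
  ring

theorem natDegree_psumPoly_le (m : ℕ) : (psumPoly m).natDegree ≤ m + 2 := by
  have h1 : (X + 1 : ℚ[X]).natDegree ≤ 1 := by compute_degree
  have h2 : (C 2 * X + 1 : ℚ[X]).natDegree ≤ 1 := by compute_degree
  have hF (p : ℕ) {q : ℚ[X]} (hq : q.natDegree ≤ 1) :
      ((faulhaber p).comp q).natDegree ≤ p + 1 := by
    rw [natDegree_comp]; nlinarith [natDegree_faulhaber_le p]
  unfold psumPoly
  refine (natDegree_sub_le_of_le (natDegree_add_le_of_le (hF _ h1)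
    (natDegree_mul_le_of_le (by compute_degree) (natDegree_sub_le_of_le (hF _ h2) (hF _ h1))))
    (natDegree_sub_le_of_le (hF _ h2) (hF _ h1))).trans ?_
  omega

theorem psumPoly_one : psumPoly 1 = X ^ 3 := by
  apply Polynomial.funext
  intro x
  simp only [psumPoly, faulhaber, eval_add, eval_sub, eval_mul, eval_comp, eval_C, eval_X,
    eval_one, eval_pow, sum_range_succ, sum_range_zero, _root_.bernoulli_zero,
    _root_.bernoulli_one, bernoulli_eq_bernoulli'_of_ne_one (by norm_num : 2 ≠ 1), bernoulli'_two]
  norm_num [Nat.choose]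
  ring

theorem psumPoly_two : psumPoly 2 = C (7 / 6) * X ^ 4 - C (1 / 6) * X ^ 2 := by
  apply Polynomial.funext
  intro x
  simp only [psumPoly, faulhaber, eval_add, eval_sub, eval_mul, eval_comp, eval_C, eval_X,
    eval_one, eval_pow, sum_range_succ, sum_range_zero, _root_.bernoulli_zero,
    _root_.bernoulli_one, bernoulli_eq_bernoulli'_of_ne_one (by norm_num : 2 ≠ 1), bernoulli'_two,
    bernoulli_eq_bernoulli'_of_ne_one (by norm_num : 3 ≠ 1), bernoulli'_three]
  norm_num [Nat.choose]
  ring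

noncomputable def genMultiset (k : ℕ) : Multiset ℚ :=
  ((Icc 1 k).val.bind fun j => Multiset.replicate j (j : ℚ))
    + ((Icc (k + 1) (2 * k)).val.bind fun j => Multiset.replicate (2 * k - j) (j : ℚ))

theorem genPoly_eq_prod_genMultiset (k : ℕ) :
    genPoly k = ((genMultiset k).map fun a => 1 + C a * X).prod := by
  simp only [genPoly, genMultiset, Multiset.map_add, Multiset.prod_add, Multiset.map_bind,
    Multiset.prod_bind, Multiset.map_replicate, Multiset.prod_replicate]
  rfl

theorem sum_genMultiset_pow (k m : ℕ) :
    ((genMultiset k).map (· ^ m)).sum = (psumPoly m).eval (k : ℚ) := by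
  simp only [eval_psumPoly, genMultiset, Multiset.map_add, Multiset.sum_add, Multiset.map_bind,
    Multiset.sum_bind, Multiset.map_replicate, Multiset.sum_replicate, nsmul_eq_mul]
  congr 1
  exact sum_congr rfl fun j _ => (pow_succ' _ _).symm

-- The paper's `f_r`: Newton's recursion for `e_r`, with the power sums replaced by `psumPoly`.
noncomputable def coeffPoly : ℕ → ℚ[X]
  | 0 => 1
  | r + 1 => C ((r + 1 : ℚ)⁻¹) *
      ∑ i ∈ range (r + 1), C ((-1) ^ i) * (psumPoly (i + 1) * coeffPoly (r - i))
  decreasing_by omega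

theorem coeff_genPoly_eq_eval_coeffPoly (k r : ℕ) :
    (genPoly k).coeff r = (coeffPoly r).eval (k : ℚ) := by
  induction r using Nat.strong_induction_on with
  | _ r ih =>
    rw [genPoly_eq_prod_genMultiset] at ih ⊢
    cases r with
    | zero => simp [coeffPoly, coeff_zero_eq_eval_zero, eval_multiset_prod]
    | succ r =>
      rw [coeffPoly, eval_mul, eval_C, eval_finsetSum, eq_inv_mul_iff_mul_eq₀ (by positivity),
        Multiset.succ_mul_coeff_prod_one_add_C_mul_X]
      refine sum_congr rfl fun i hi => ?_
      rw [sum_genMultiset_pow, ih (r - i) (by omega), eval_mul, eval_C, eval_mul, mul_assoc]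

theorem natDegree_coeffPoly_le (r : ℕ) : (coeffPoly r).natDegree ≤ 3 * r := by
  induction r using Nat.strong_induction_on with
  | _ r ih =>
    cases r with
    | zero => simp [coeffPoly]
    | succ r =>
      rw [coeffPoly]
      refine (natDegree_C_mul_le _ _).trans (natDegree_sum_le_of_forall_le _ _ fun i hi => ?_)
      have := mem_range.mp hi
      refine (natDegree_C_mul_le _ _).trans (natDegree_mul_le_of_le (natDegree_psumPoly_le _)
        (ih (r - i) (by omega))) |>.trans (by omega)

theorem coeff_psumPoly_mul_coeffPoly_eq_zero {r i n : ℕ} (hi : i ≤ r)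
    (hn : 3 * r + 3 < n + 2 * i) :
    (psumPoly (i + 1) * coeffPoly (r - i)).coeff n = 0 := by
  refine coeff_eq_zero_of_natDegree_lt ((natDegree_mul_le_of_le (natDegree_psumPoly_le _)
    (natDegree_coeffPoly_le _)).trans_lt ?_)
  omega

theorem coeff_coeffPoly_succ (r n : ℕ) :
    (coeffPoly (r + 1)).coeff n = (r + 1 : ℚ)⁻¹ *
      ∑ i ∈ range (r + 1), (-1) ^ i * (psumPoly (i + 1) * coeffPoly (r - i)).coeff n := by
  simp only [coeffPoly, coeff_C_mul, finsetSum_coeff]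

theorem coeff_coeffPoly_three_mul (r : ℕ) :
    (coeffPoly r).coeff (3 * r) = (r.factorial : ℚ)⁻¹ := by
  induction r with
  | zero => simp [coeffPoly]
  | succ r ih =>
    rw [coeff_coeffPoly_succ, sum_eq_single_of_mem 0 (by simp) fun i _ hi =>
      by rw [coeff_psumPoly_mul_coeffPoly_eq_zero (by grind) (by omega), mul_zero]]
    rw [psumPoly_one, show 3 * (r + 1) = 3 * r + 3 by ring, coeff_X_pow_mul, Nat.sub_zero, ih,
      Nat.factorial_succ, Nat.cast_mul, mul_inv]
    push_cast
    ring

theorem coeff_psumPoly_two_mul_coeffPoly (s : ℕ) :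
    (psumPoly 2 * coeffPoly s).coeff (3 * s + 4) = 7 / 6 * (s.factorial : ℚ)⁻¹ := by
  rw [add_comm, coeff_mul_add_eq_of_natDegree_le (natDegree_psumPoly_le 2)
    (natDegree_coeffPoly_le s), coeff_coeffPoly_three_mul, psumPoly_two]
  simp [coeff_X_pow]

theorem coeff_coeffPoly_add_two_rec (s : ℕ) :
    (coeffPoly (s + 2)).coeff (3 * s + 4) =
      (s + 2 : ℚ)⁻¹ *
        ((coeffPoly (s + 1)).coeff (3 * s + 1) - 7 / 6 * (s.factorial : ℚ)⁻¹) := by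
  rw [coeff_coeffPoly_succ, sum_range_succ', sum_range_succ',
    sum_eq_zero fun i hi => by
      rw [coeff_psumPoly_mul_coeffPoly_eq_zero (by grind) (by omega), mul_zero]]
  have hX : (X ^ 3 * coeffPoly (s + 1)).coeff (3 * s + 4) = (coeffPoly (s + 1)).coeff (3 * s + 1) :=
    by rw [show 3 * s + 4 = 3 * s + 1 + 3 by ring, coeff_X_pow_mul]
  simp only [zero_add, Nat.reduceAdd, Nat.add_sub_cancel, Nat.sub_zero, psumPoly_one, hX,
    coeff_psumPoly_two_mul_coeffPoly]
  push_cast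
  ring

theorem coeff_coeffPoly_add_two (s : ℕ) :
    (coeffPoly (s + 2)).coeff (3 * s + 4) = -7 / (12 * (s.factorial : ℚ)) := by
  induction s with
  | zero =>
    have h1 : (coeffPoly 1).coeff 1 = 0 := by simp [coeffPoly, psumPoly_one, coeff_X_pow]
    rw [coeff_coeffPoly_add_two_rec, h1]
    norm_num
  | succ s ih =>
    rw [coeff_coeffPoly_add_two_rec, show 3 * (s + 1) + 1 = 3 * s + 4 by ring, ih, Nat.factorial_succ]
    have : (s.factorial : ℚ) ≠ 0 := by positivity
    push_cast
    field_simp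
    ring

theorem stmt_14_general (r : ℕ) (hr : 2 ≤ r) (f : Polynomial ℚ)
    (hval : ∀ k : ℕ, 0 < k → r ≤ k ^ 2 → (genPoly k).coeff r = f.eval (k : ℚ)) :
    f.coeff (3 * r - 2) = -7 / (12 * ((r - 2).factorial : ℚ)) := by
  have hf : f = coeffPoly r := by
    refine eq_of_infinite_eval_eq _ _
      (((Set.Ici_infinite r).image Nat.cast_injective.injOn).mono ?_)
    rintro _ ⟨k, hk, rfl⟩
    rw [Set.mem_ofPred_eq, ← coeff_genPoly_eq_eval_coeffPoly,
      hval k (by grind) (hk.trans (Nat.le_self_pow two_ne_zero k))]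
  obtain ⟨s, rfl⟩ := Nat.exists_eq_add_of_le' hr
  rw [hf, show 3 * (s + 2) - 2 = 3 * s + 4 by omega, Nat.add_sub_cancel, coeff_coeffPoly_add_two]

theorem stmt_14 (r : ℕ) (hr : 2 ≤ r) (f : Polynomial ℚ)
    (hdeg : f.natDegree = 3 * r)
    (hval : ∀ k : ℕ, 0 < k → r ≤ k ^ 2 → (genPoly k).coeff r = f.eval (k : ℚ)) :
    f.coeff (3 * r - 2) = -7 / (12 * ((r - 2).factorial : ℚ)) :=
  stmt_14_general r hr f hval
end
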